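/- Let $R$ be an irreducible simply-laced root system, $\alpha$ a simple root with minuscule fundamental weight $\varpi_\alpha$, $I = S \setminus \{\alpha\}$, and $w \in W$ with $w(I)\subseteq R^+$. Suppose $\beta$ is the unique simple root with $w^{-1}(\beta) \in R^-$ (i.e. $R^+(w^{-1}) \cap S = \{\beta\}$). Then the support of $w$ (the set of simple roots whose reflections occur in some, equivalently any, reduced decomposition of $w$) equals the support of the root $-w^{-1}(\beta)$ (the set of simple roots occurring with nonzero coefficient in $-w^{-1}(\beta)$). -/

import Mathlib

open scoped RealInnerProductSpace

noncomputable section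

variable {V : Type} [NormedAddCommGroup V] [InnerProductSpace ℝ V]

/-- The reflection of `V` in the hyperplane orthogonal to `α`
(the identity map when `α = 0`). -/
def reflVec (α : V) : V ≃ₗ[ℝ] V where
  toFun x := x - (2 * ⟪x, α⟫ / ⟪α, α⟫) • α
  invFun x := x - (2 * ⟪x, α⟫ / ⟪α, α⟫) • α
  map_add' x y := by
    have h : 2 * ⟪x + y, α⟫ / ⟪α, α⟫ = 2 * ⟪x, α⟫ / ⟪α, α⟫ + 2 * ⟪y, α⟫ / ⟪α, α⟫ := by
      rw [inner_add_left]; ring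
    rw [h, add_smul]; abel
  map_smul' r x := by
    have h : 2 * ⟪r • x, α⟫ / ⟪α, α⟫ = r * (2 * ⟪x, α⟫ / ⟪α, α⟫) := by
      rw [real_inner_smul_left]; ring
    simp only [RingHom.id_apply]
    rw [h, mul_smul, smul_sub]
  left_inv x := by
    dsimp only
    by_cases h : (⟪α, α⟫ : ℝ) = 0
    · simp [inner_self_eq_zero.mp h]
    · have h2 : 2 * ⟪x - (2 * ⟪x, α⟫ / ⟪α, α⟫) • α, α⟫ / ⟪α, α⟫
          = -(2 * ⟪x, α⟫ / ⟪α, α⟫) := by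
        rw [inner_sub_left, real_inner_smul_left]
        field_simp
        ring
      rw [h2, neg_smul, sub_neg_eq_add, sub_add_cancel]
  right_inv x := by
    dsimp only
    by_cases h : (⟪α, α⟫ : ℝ) = 0
    · simp [inner_self_eq_zero.mp h]
    · have h2 : 2 * ⟪x - (2 * ⟪x, α⟫ / ⟪α, α⟫) • α, α⟫ / ⟪α, α⟫
          = -(2 * ⟪x, α⟫ / ⟪α, α⟫) := by
        rw [inner_sub_left, real_inner_smul_left]
        field_simp
        ring
      rw [h2, neg_smul, sub_neg_eq_add, sub_add_cancel]

/-- The pairing `⟨x, y^∨⟩ = 2(x,y)/(y,y)` of a vector with the coroot of `y`. -/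
def cpair (x y : V) : ℝ := 2 * ⟪x, y⟫ / ⟪y, y⟫

/-- A (reduced, crystallographic) root system in a real inner product space,
together with a chosen system of simple roots. -/
structure RootSystemData (V : Type) [NormedAddCommGroup V] [InnerProductSpace ℝ V] where
  roots : Finset V
  simples : Finset V
  simples_subset : simples ⊆ roots
  root_ne_zero : ∀ α ∈ roots, α ≠ 0
  pairing_int : ∀ α ∈ roots, ∀ β ∈ roots, ∃ n : ℤ, (n : ℝ) = cpair α β
  reflect_mem : ∀ α ∈ roots, ∀ β ∈ roots, reflVec α β ∈ roots
  reduced : ∀ α ∈ roots, ∀ t : ℝ, t • α ∈ roots → t = 1 ∨ t = -1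
  simples_indep : LinearIndependent ℝ (fun a : {x // x ∈ simples} => (a : V))
  root_pos_or_neg : ∀ β ∈ roots,
    (∃ c : V → ℕ, β = ∑ α ∈ simples, (c α : ℝ) • α) ∨
    (∃ c : V → ℕ, -β = ∑ α ∈ simples, (c α : ℝ) • α)

namespace RootSystemData

/-- `v` is a non-negative integer combination of the elements of `I`. -/
def IsPosCombOf (P : RootSystemData V) (I : Finset V) (v : V) : Prop :=
  ∃ c : V → ℕ, v = ∑ α ∈ I, (c α : ℝ) • α

/-- `v` is a non-negative integer combination of the simple roots. -/
def IsPosComb (P : RootSystemData V) (v : V) : Prop := P.IsPosCombOf P.simples v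

/-- The set of positive roots. -/
def Pos (P : RootSystemData V) : Set V := {β | β ∈ P.roots ∧ P.IsPosComb β}

/-- The set of negative roots. -/
def Neg (P : RootSystemData V) : Set V := {β | -β ∈ P.Pos}

/-- The positive roots lying in the root subsystem generated by `I`. -/
def PosOf (P : RootSystemData V) (I : Finset V) : Set V := {β | β ∈ P.roots ∧ P.IsPosCombOf I β}

/-- The half sum of the positive roots. -/
def rho (P : RootSystemData V) : V := (2 : ℝ)⁻¹ • ∑ᶠ β ∈ P.Pos, β

/-- The half sum of the positive roots in the root subsystem generated by `I`. -/
def rhoOf (P : RootSystemData V) (I : Finset V) : V := (2 : ℝ)⁻¹ • ∑ᶠ β ∈ P.PosOf I, β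

/-- The parabolic subgroup of the Weyl group generated by the reflections
in the elements of `I`. -/
def WeylOf (P : RootSystemData V) (I : Finset V) : Subgroup (V ≃ₗ[ℝ] V) :=
  Subgroup.closure (reflVec '' (I : Set V))

/-- The Weyl group, generated by the simple reflections. -/
def Weyl (P : RootSystemData V) : Subgroup (V ≃ₗ[ℝ] V) := P.WeylOf P.simples

/-- `l` is a word with letters in `I` whose associated product of reflections is `w`. -/
def IsWordOf (P : RootSystemData V) (I : Finset V) (l : List V) (w : V ≃ₗ[ℝ] V) : Prop :=
  (∀ α ∈ l, α ∈ I) ∧ (l.map reflVec).prod = w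

/-- The length of `w` with respect to the reflections in the elements of `I`. -/
def lengthOf (P : RootSystemData V) (I : Finset V) (w : V ≃ₗ[ℝ] V) : ℕ :=
  sInf {n | ∃ l, P.IsWordOf I l w ∧ l.length = n}

/-- The Coxeter length of `w` with respect to the simple reflections. -/
def length (P : RootSystemData V) (w : V ≃ₗ[ℝ] V) : ℕ := P.lengthOf P.simples w

/-- `l` is a reduced decomposition of `w` into simple reflections. -/
def IsReducedWord (P : RootSystemData V) (l : List V) (w : V ≃ₗ[ℝ] V) : Prop :=
  P.IsWordOf P.simples l w ∧ l.length = P.length w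

/-- The partial order on the root lattice: `x ≤ y` iff `y - x` is a non-negative
integer combination of simple roots. -/
def rootLE (P : RootSystemData V) (x y : V) : Prop := P.IsPosComb (y - x)

/-- The root system is simply laced: all roots have the same length. -/
def SimplyLaced (P : RootSystemData V) : Prop := ∀ α ∈ P.roots, ∀ β ∈ P.roots, ⟪α, α⟫ = ⟪β, β⟫

/-- The root system is irreducible: it admits no decomposition into two
non-empty mutually orthogonal parts. -/
def Irred (P : RootSystemData V) : Prop :=
  ∀ A B : Set V, (P.roots : Set V) ⊆ A ∪ B →
    (∀ a ∈ A ∩ (P.roots : Set V), ∀ b ∈ B ∩ (P.roots : Set V), ⟪a, b⟫ = 0) →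
    A ∩ (P.roots : Set V) = ∅ ∨ B ∩ (P.roots : Set V) = ∅

/-- `ϖ` is the fundamental weight associated with the simple root `α`. -/
def IsFundamentalWeight (P : RootSystemData V) (α ϖ : V) : Prop :=
  cpair ϖ α = 1 ∧ ∀ γ ∈ P.simples, γ ≠ α → cpair ϖ γ = 0

/-- The weight `ϖ` is minuscule: it pairs with every positive coroot by at most `1`. -/
def IsMinusculeWeight (P : RootSystemData V) (ϖ : V) : Prop := ∀ β ∈ P.Pos, cpair ϖ β ≤ 1

/-- The support of `w`: the set of simple roots whose reflections occur in a
reduced decomposition of `w`. -/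
def Supp (P : RootSystemData V) (w : V ≃ₗ[ℝ] V) : Set V :=
  {δ | δ ∈ P.simples ∧ ∃ l, P.IsReducedWord l w ∧ δ ∈ l}

end RootSystemData

/-!
Write `θ = -w⁻¹ β`. If `δ` does not occur in a reduced word of `w`, then `w⁻¹ β - β` lies in the
span of the letters of the word, so `δ` has coefficient `0` in `θ`. Conversely, cutting a reduced
word at an occurrence of `δ` produces a positive root `ρ` with `w ρ < 0` in which `δ` has
coefficient `1`. Minusculity forces every root inverted by `w⁻¹` to have `α`-coefficient `1`, so
the sum of two of them is never inverted again; with the uniqueness of `β` this shows, by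
induction on height, that `θ` dominates every positive root inverted by `w`, in particular `ρ`.
-/

namespace RootSystemData

section Reflections

lemma reflVec_apply (γ x : V) : reflVec γ x = x - cpair x γ • γ := rfl

lemma reflVec_self {γ : V} (hγ : γ ≠ 0) : reflVec γ γ = -γ := by
  have h : cpair γ γ = 2 := by
    rw [cpair, mul_div_assoc, div_self (inner_self_ne_zero.mpr hγ), mul_one]
  rw [reflVec_apply, h, two_smul, sub_add_cancel_left]

lemma reflVec_mul_self (γ : V) : reflVec γ * reflVec γ = 1 :=
  LinearEquiv.ext (reflVec γ).left_inv

lemma reflVec_inv (γ : V) : (reflVec γ)⁻¹ = reflVec γ :=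
  inv_eq_of_mul_eq_one_right (reflVec_mul_self γ)

lemma inner_reflVec (γ x y : V) : ⟪reflVec γ x, reflVec γ y⟫ = ⟪x, y⟫ := by
  by_cases h : γ = 0
  · simp [reflVec_apply, h]
  · have h' : (⟪γ, γ⟫ : ℝ) ≠ 0 := inner_self_ne_zero.mpr h
    simp only [reflVec_apply, cpair, inner_sub_left, inner_sub_right, real_inner_smul_left,
      real_inner_smul_right, real_inner_comm γ x, real_inner_comm γ y]
    field_simp
    ring

lemma mul_reflVec {u : V ≃ₗ[ℝ] V} (hu : ∀ x y, ⟪u x, u y⟫ = ⟪x, y⟫) (γ : V) :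
    u * reflVec γ = reflVec (u γ) * u := by
  ext x
  simp only [LinearEquiv.mul_apply, reflVec_apply, cpair, map_sub, map_smul, hu]

lemma inner_eq_cpair_mul {x y : V} (hy : y ≠ 0) : ⟪x, y⟫ = cpair x y * ⟪y, y⟫ / 2 := by
  rw [cpair]
  field_simp [inner_self_ne_zero.mpr hy]

lemma inner_prod_reflVec (l : List V) (x y : V) :
    ⟪(l.map reflVec).prod x, (l.map reflVec).prod y⟫ = ⟪x, y⟫ := by
  induction l with
  | nil => rfl
  | cons γ t ih => simpa [inner_reflVec] using ih

lemma prod_reverse_reflVec (l : List V) :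
    (l.reverse.map reflVec).prod = ((l.map reflVec).prod)⁻¹ := by
  induction l with
  | nil => simp
  | cons γ t ih =>
    simp only [List.reverse_cons, List.map_append, List.prod_append, ih, List.map_cons,
      List.prod_cons, List.map_nil, List.prod_nil, mul_one, mul_inv_rev, reflVec_inv]

lemma prod_reflVec_sub_mem_span (l : List V) (x : V) :
    (l.map reflVec).prod x - x ∈ Submodule.span ℝ {y | y ∈ l} := by
  induction l with
  | nil => simp
  | cons γ t ih =>
    have h : reflVec γ ((t.map reflVec).prod x) - x
        = ((t.map reflVec).prod x - x) - cpair ((t.map reflVec).prod x) γ • γ := by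
      rw [reflVec_apply]; abel
    simp only [List.map_cons, List.prod_cons, LinearEquiv.mul_apply, h]
    refine Submodule.sub_mem _ (Submodule.span_mono (fun y hy => ?_) ih)
      (Submodule.smul_mem _ _ (Submodule.subset_span List.mem_cons_self))
    exact List.mem_cons_of_mem _ hy

end Reflections

section Coefficients

variable (P : RootSystemData V)

lemma linearIndepOn_simples : LinearIndepOn ℝ id (P.simples : Set V) := P.simples_indep

open Classical in
/-- The coefficient of `δ` in the expansion of a vector along the simple roots, read off from a
basis of `V` extending them; it is identically zero when `δ` is not simple. -/
def coeff (δ : V) : V →ₗ[ℝ] ℝ :=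
  if h : δ ∈ P.simples then
    (Module.Basis.extend P.linearIndepOn_simples).coord
      ⟨δ, P.linearIndepOn_simples.subset_extend _ h⟩
  else 0

def height : V →ₗ[ℝ] ℝ := ∑ δ ∈ P.simples, P.coeff δ

variable {P}

lemma repr_extend_simple {γ : V} (hγ : γ ∈ P.simples) :
    (Module.Basis.extend P.linearIndepOn_simples).repr γ
      = Finsupp.single ⟨γ, P.linearIndepOn_simples.subset_extend _ hγ⟩ 1 := by
  have h := (Module.Basis.extend P.linearIndepOn_simples).repr_self
    ⟨γ, P.linearIndepOn_simples.subset_extend _ hγ⟩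
  rwa [Module.Basis.extend_apply_self] at h

lemma coeff_self {δ : V} (hδ : δ ∈ P.simples) : P.coeff δ δ = 1 := by
  rw [coeff, dif_pos hδ, Module.Basis.coord_apply, repr_extend_simple hδ, Finsupp.single_eq_same]

lemma coeff_of_ne {δ γ : V} (hγ : γ ∈ P.simples) (hne : γ ≠ δ) : P.coeff δ γ = 0 := by
  unfold coeff
  split_ifs
  · rw [Module.Basis.coord_apply, repr_extend_simple hγ,
      Finsupp.single_eq_of_ne (fun h => hne (congrArg Subtype.val h).symm)]
  · rfl

lemma coeff_simple [DecidableEq V] {δ γ : V} (hγ : γ ∈ P.simples) :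
    P.coeff δ γ = if γ = δ then 1 else 0 := by
  split_ifs with h
  · exact h ▸ coeff_self hγ
  · exact coeff_of_ne hγ h

lemma coeff_sum_smul {δ : V} (hδ : δ ∈ P.simples) (c : V → ℝ) :
    P.coeff δ (∑ γ ∈ P.simples, c γ • γ) = c δ := by
  classical
  simp only [map_sum, map_smul, smul_eq_mul]
  rw [Finset.sum_congr rfl fun γ hγ => by rw [coeff_simple hγ, mul_ite, mul_one, mul_zero],
    Finset.sum_ite_eq', if_pos hδ]

lemma sum_coeff_smul {x : V} (hx : x ∈ Submodule.span ℝ (P.simples : Set V)) :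
    ∑ δ ∈ P.simples, P.coeff δ x • δ = x := by
  obtain ⟨f, -, rfl⟩ := Submodule.mem_span_finset.mp hx
  exact Finset.sum_congr rfl fun δ hδ => by rw [coeff_sum_smul hδ]

lemma coeff_eq_zero_of_mem_span {s : Set V} (hs : s ⊆ P.simples) {δ : V} (hδ : δ ∉ s) {x : V}
    (hx : x ∈ Submodule.span ℝ s) : P.coeff δ x = 0 := by
  refine LinearMap.mem_ker.mp (Submodule.span_le.mpr (fun γ hγ => ?_) hx)
  exact coeff_of_ne (hs hγ) (ne_of_mem_of_not_mem hγ hδ)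

lemma height_sum_smul (c : V → ℝ) : P.height (∑ γ ∈ P.simples, c γ • γ) = ∑ γ ∈ P.simples, c γ := by
  rw [height, LinearMap.coe_sum, Finset.sum_apply]
  exact Finset.sum_congr rfl fun δ hδ => coeff_sum_smul hδ c

lemma height_simple {γ : V} (hγ : γ ∈ P.simples) : P.height γ = 1 := by
  classical
  rw [height, LinearMap.coe_sum, Finset.sum_apply,
    Finset.sum_congr rfl fun δ _ => coeff_simple hγ, Finset.sum_ite_eq, if_pos hγ]

end Coefficients

section Positivity

variable {P : RootSystemData V}

lemma isPosComb_iff_mem_closure {x : V} :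
    P.IsPosComb x ↔ x ∈ AddSubmonoid.closure (P.simples : Set V) := by
  classical
  constructor
  · rintro ⟨c, rfl⟩
    refine AddSubmonoid.sum_mem _ fun γ hγ => ?_
    rw [Nat.cast_smul_eq_nsmul]
    exact AddSubmonoid.nsmul_mem _ (AddSubmonoid.subset_closure hγ) _
  · intro hx
    induction hx using AddSubmonoid.closure_induction with
    | mem γ hγ =>
      refine ⟨fun δ => if δ = γ then 1 else 0, ?_⟩
      simp only [Nat.cast_ite, Nat.cast_one, Nat.cast_zero, ite_smul, one_smul, zero_smul,
        Finset.sum_ite_eq', if_pos (Finset.mem_coe.mp hγ)]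
    | zero => exact ⟨0, by simp⟩
    | add x y _ _ hx hy =>
      obtain ⟨a, rfl⟩ := hx
      obtain ⟨b, rfl⟩ := hy
      exact ⟨a + b, by simp only [Pi.add_apply, Nat.cast_add, add_smul, Finset.sum_add_distrib]⟩

lemma IsPosComb.add {x y : V} (hx : P.IsPosComb x) (hy : P.IsPosComb y) : P.IsPosComb (x + y) :=
  isPosComb_iff_mem_closure.mpr
    (add_mem (isPosComb_iff_mem_closure.mp hx) (isPosComb_iff_mem_closure.mp hy))

lemma isPosComb_zero : P.IsPosComb 0 := ⟨0, by simp⟩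

lemma IsPosComb.coeff_nonneg {x : V} (hx : P.IsPosComb x) {δ : V} (hδ : δ ∈ P.simples) :
    0 ≤ P.coeff δ x := by
  obtain ⟨c, rfl⟩ := hx
  rw [coeff_sum_smul hδ]
  exact Nat.cast_nonneg _

lemma IsPosComb.height_nonneg {x : V} (hx : P.IsPosComb x) : 0 ≤ P.height x := by
  rw [height, LinearMap.coe_sum, Finset.sum_apply]
  exact Finset.sum_nonneg fun δ hδ => hx.coeff_nonneg hδ

lemma one_le_height {x : V} (hx : x ∈ P.Pos) : 1 ≤ P.height x := by
  obtain ⟨hroot, c, rfl⟩ := hx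
  rw [height_sum_smul, ← Nat.cast_sum, Nat.one_le_cast, Nat.one_le_iff_ne_zero]
  intro h0
  refine P.root_ne_zero _ hroot (Finset.sum_eq_zero fun γ hγ => ?_)
  rw [Finset.sum_eq_zero_iff.mp h0 γ hγ, Nat.cast_zero, zero_smul]

lemma neg_mem_neg {x : V} : -x ∈ P.Neg ↔ x ∈ P.Pos := by
  show -(-x) ∈ P.Pos ↔ x ∈ P.Pos
  rw [neg_neg]

lemma not_isPosComb_of_mem_neg {x : V} (hx : x ∈ P.Neg) : ¬ P.IsPosComb x := fun hpos => by
  have h := one_le_height hx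
  rw [map_neg] at h
  linarith [hpos.height_nonneg]

lemma not_mem_neg_of_mem_pos {x : V} (hx : x ∈ P.Pos) : x ∉ P.Neg :=
  fun hneg => not_isPosComb_of_mem_neg hneg hx.2

lemma simple_mem_pos {γ : V} (hγ : γ ∈ P.simples) : γ ∈ P.Pos :=
  ⟨P.simples_subset hγ, isPosComb_iff_mem_closure.mpr (AddSubmonoid.subset_closure hγ)⟩

lemma neg_mem_roots {x : V} (hx : x ∈ P.roots) : -x ∈ P.roots := by
  simpa [reflVec_self (P.root_ne_zero x hx)] using P.reflect_mem x hx x hx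

lemma mem_pos_or_mem_neg {x : V} (hx : x ∈ P.roots) : x ∈ P.Pos ∨ x ∈ P.Neg := by
  rcases P.root_pos_or_neg x hx with h | h
  · exact Or.inl ⟨hx, h⟩
  · exact Or.inr ⟨neg_mem_roots hx, h⟩

lemma IsPosComb.mem_span {x : V} (hx : P.IsPosComb x) :
    x ∈ Submodule.span ℝ (P.simples : Set V) := by
  obtain ⟨c, rfl⟩ := hx
  exact Submodule.sum_mem _ fun γ hγ => Submodule.smul_mem _ _ (Submodule.subset_span hγ)

lemma mem_span_of_mem_roots {x : V} (hx : x ∈ P.roots) :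
    x ∈ Submodule.span ℝ (P.simples : Set V) := by
  rcases mem_pos_or_mem_neg hx with h | h
  · exact h.2.mem_span
  · simpa using Submodule.neg_mem _ h.2.mem_span

lemma exists_coeff_pos_of_ne {x γ : V} (hγ : γ ∈ P.simples) (hx : x ∈ P.Pos) (hne : x ≠ γ) :
    ∃ δ ∈ P.simples, δ ≠ γ ∧ 0 < P.coeff δ x := by
  by_contra! hcon
  obtain ⟨hroot, c, hc⟩ := hx
  have hcoeff : ∀ δ ∈ P.simples, δ ≠ γ → (c δ : ℝ) = 0 := fun δ hδ hδγ => by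
    have h := hcon δ hδ hδγ
    rw [hc, coeff_sum_smul hδ] at h
    exact le_antisymm h (Nat.cast_nonneg _)
  have hxγ : x = (c γ : ℝ) • γ := by
    rw [hc, Finset.sum_eq_single_of_mem γ hγ fun δ hδ hδγ => by rw [hcoeff δ hδ hδγ, zero_smul]]
  rcases P.reduced γ (P.simples_subset hγ) _ (hxγ ▸ hroot) with h | h
  · exact hne (by rw [hxγ, h, one_smul])
  · linarith [(Nat.cast_nonneg (c γ) : (0 : ℝ) ≤ _)]

lemma eq_of_reflVec_mem_neg {x γ : V} (hγ : γ ∈ P.simples) (hx : x ∈ P.Pos)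
    (hneg : reflVec γ x ∈ P.Neg) : x = γ := by
  by_contra hne
  obtain ⟨δ, hδ, hδγ, hpos⟩ := exists_coeff_pos_of_ne hγ hx hne
  have h := hneg.2.coeff_nonneg hδ
  rw [map_neg, reflVec_apply, map_sub, map_smul, coeff_of_ne hγ hδγ.symm, smul_zero,
    sub_zero] at h
  linarith

end Positivity

section Words

variable {P : RootSystemData V}

lemma IsWordOf.reverse {I : Finset V} {l : List V} {w : V ≃ₗ[ℝ] V} (hl : P.IsWordOf I l w) :
    P.IsWordOf I l.reverse w⁻¹ :=
  ⟨fun γ hγ => hl.1 γ (List.mem_reverse.mp hγ), by rw [prod_reverse_reflVec, hl.2]⟩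

lemma exists_isWordOf {w : V ≃ₗ[ℝ] V} (hw : w ∈ P.Weyl) : ∃ l, P.IsWordOf P.simples l w := by
  induction hw using Subgroup.closure_induction with
  | mem x hx =>
    obtain ⟨γ, hγ, rfl⟩ := hx
    exact ⟨[γ], by simpa using hγ, by simp⟩
  | one => exact ⟨[], by simp, by simp⟩
  | mul x y _ _ hx hy =>
    obtain ⟨l, hl⟩ := hx
    obtain ⟨m, hm⟩ := hy
    refine ⟨l ++ m, fun γ hγ => ?_, by rw [List.map_append, List.prod_append, hl.2, hm.2]⟩
    exact (List.mem_append.mp hγ).elim (hl.1 γ) (hm.1 γ)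
  | inv x _ hx =>
    obtain ⟨l, hl⟩ := hx
    exact ⟨l.reverse, hl.reverse⟩

lemma IsWordOf.mem_weyl {l : List V} {w : V ≃ₗ[ℝ] V} (hl : P.IsWordOf P.simples l w) :
    w ∈ P.Weyl := by
  rw [← hl.2]
  refine P.Weyl.list_prod_mem fun v hv => ?_
  obtain ⟨γ, hγ, rfl⟩ := List.mem_map.mp hv
  exact Subgroup.subset_closure ⟨γ, hl.1 γ hγ, rfl⟩

lemma prod_reflVec_mem_roots {l : List V} (hl : ∀ γ ∈ l, γ ∈ P.simples) {x : V}
    (hx : x ∈ P.roots) : (l.map reflVec).prod x ∈ P.roots := by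
  induction l with
  | nil => exact hx
  | cons γ t ih =>
    exact P.reflect_mem γ (P.simples_subset (hl γ List.mem_cons_self)) _
      (ih fun δ hδ => hl δ (List.mem_cons_of_mem _ hδ))

lemma map_mem_roots {w : V ≃ₗ[ℝ] V} (hw : w ∈ P.Weyl) {x : V} (hx : x ∈ P.roots) :
    w x ∈ P.roots := by
  obtain ⟨l, hl, rfl⟩ := exists_isWordOf hw
  exact prod_reflVec_mem_roots hl hx

lemma IsWordOf.coeff_map {l : List V} {w : V ≃ₗ[ℝ] V} (hl : P.IsWordOf P.simples l w) {δ : V}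
    (hδ : δ ∉ l) (x : V) : P.coeff δ (w x) = P.coeff δ x := by
  rw [← sub_eq_zero, ← map_sub, ← hl.2]
  exact coeff_eq_zero_of_mem_span hl.1 hδ (prod_reflVec_sub_mem_span l x)

lemma exists_shorter_isWordOf_mul_reflVec {l : List V} {w : V ≃ₗ[ℝ] V} {γ : V}
    (hl : P.IsWordOf P.simples l w) (hγ : γ ∈ P.simples) (hneg : w γ ∈ P.Neg) :
    ∃ l', P.IsWordOf P.simples l' (w * reflVec γ) ∧ l'.length < l.length := by
  induction l generalizing w with
  | nil =>
    obtain rfl : w = 1 := hl.2.symm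
    exact absurd hneg (not_mem_neg_of_mem_pos (simple_mem_pos hγ))
  | cons δ t ih =>
    obtain ⟨hlδt, rfl⟩ := hl
    have hδ : δ ∈ P.simples := hlδt δ List.mem_cons_self
    have ht : ∀ x ∈ t, x ∈ P.simples := fun x hx => hlδt x (List.mem_cons_of_mem _ hx)
    set u := (t.map reflVec).prod
    have hw : ((δ :: t).map reflVec).prod = reflVec δ * u := rfl
    rcases mem_pos_or_mem_neg (prod_reflVec_mem_roots ht (P.simples_subset hγ)) with hpos | hneg'
    · have huγ : u γ = δ := eq_of_reflVec_mem_neg hδ hpos hneg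
      refine ⟨t, ⟨ht, ?_⟩, by simp⟩
      rw [hw, mul_assoc, mul_reflVec (inner_prod_reflVec t) γ, huγ, ← mul_assoc,
        reflVec_mul_self, one_mul]
    · obtain ⟨t', ht', hlen⟩ := ih ⟨ht, rfl⟩ hneg'
      refine ⟨δ :: t', ⟨?_, ?_⟩, by simpa using hlen⟩
      · exact List.forall_mem_cons.mpr ⟨hδ, ht'.1⟩
      · rw [List.map_cons, List.prod_cons, ht'.2, hw, mul_assoc]

end Words

section Length

variable {P : RootSystemData V}

lemma length_le {l : List V} {w : V ≃ₗ[ℝ] V} (hl : P.IsWordOf P.simples l w) :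
    P.length w ≤ l.length :=
  Nat.sInf_le ⟨l, hl, rfl⟩

lemma exists_isReducedWord {w : V ≃ₗ[ℝ] V} (hw : w ∈ P.Weyl) : ∃ l, P.IsReducedWord l w :=
  Nat.sInf_mem (s := {n | ∃ l, P.IsWordOf P.simples l w ∧ l.length = n})
    (let ⟨l, hl⟩ := exists_isWordOf hw; ⟨_, l, hl, rfl⟩)

lemma length_inv (w : V ≃ₗ[ℝ] V) : P.length w⁻¹ = P.length w := by
  have h : ∀ v : V ≃ₗ[ℝ] V, {n | ∃ l, P.IsWordOf P.simples l v⁻¹ ∧ l.length = n}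
      ⊆ {n | ∃ l, P.IsWordOf P.simples l v ∧ l.length = n} := fun v n ⟨l, hl, hn⟩ =>
    ⟨l.reverse, inv_inv v ▸ hl.reverse, by rw [List.length_reverse, hn]⟩
  unfold length lengthOf
  rw [(h w).antisymm (by simpa using h w⁻¹)]

lemma IsReducedWord.reverse {l : List V} {w : V ≃ₗ[ℝ] V} (hl : P.IsReducedWord l w) :
    P.IsReducedWord l.reverse w⁻¹ :=
  ⟨hl.1.reverse, by rw [List.length_reverse, hl.2, length_inv]⟩

lemma IsReducedWord.of_append {l₁ l₂ : List V} {w : V ≃ₗ[ℝ] V}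
    (hl : P.IsReducedWord (l₁ ++ l₂) w) : P.IsReducedWord l₁ (l₁.map reflVec).prod := by
  have h₁ : ∀ γ ∈ l₁, γ ∈ P.simples := fun γ hγ => hl.1.1 γ (List.mem_append_left _ hγ)
  refine ⟨⟨h₁, rfl⟩, le_antisymm ?_ (length_le ⟨h₁, rfl⟩)⟩
  obtain ⟨m, ⟨hm, hmw⟩, hmlen⟩ := exists_isReducedWord (IsWordOf.mem_weyl ⟨h₁, rfl⟩)
  have hw : P.IsWordOf P.simples (m ++ l₂) w := by
    refine ⟨fun γ hγ => (List.mem_append.mp hγ).elim (hm γ) fun h => ?_, ?_⟩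
    · exact hl.1.1 γ (List.mem_append_right _ h)
    · rw [List.map_append, List.prod_append, hmw, ← List.prod_append, ← List.map_append, hl.1.2]
  have := length_le hw
  rw [List.length_append, hmlen, ← hl.2, List.length_append] at this
  omega

end Length

section Inversions

variable {P : RootSystemData V}

lemma IsReducedWord.prod_mem_pos {A B : List V} {γ : V} {w : V ≃ₗ[ℝ] V}
    (hl : P.IsReducedWord (A ++ γ :: B) w) : (A.map reflVec).prod γ ∈ P.Pos := by
  have hA : ∀ x ∈ A, x ∈ P.simples := fun x hx => hl.1.1 x (List.mem_append_left _ hx)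
  have hγ : γ ∈ P.simples := hl.1.1 γ (by simp)
  have hred := IsReducedWord.of_append (l₁ := A ++ [γ]) (l₂ := B) (by simpa using hl)
  rcases mem_pos_or_mem_neg (prod_reflVec_mem_roots hA (P.simples_subset hγ)) with hpos | hneg
  · exact hpos
  · obtain ⟨l', hl', hlt⟩ := exists_shorter_isWordOf_mul_reflVec ⟨hA, rfl⟩ hγ hneg
    have hlen := hred.2
    simp only [List.map_append, List.map_cons, List.map_nil, List.prod_append, List.prod_cons,
      List.prod_nil, mul_one, List.length_append, List.length_singleton] at hlen
    have := length_le hl'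
    omega

lemma IsReducedWord.inv_prod_mem_pos {A B : List V} {γ : V} {w : V ≃ₗ[ℝ] V}
    (hl : P.IsReducedWord (A ++ γ :: B) w) : ((B.map reflVec).prod)⁻¹ γ ∈ P.Pos := by
  have h := IsReducedWord.prod_mem_pos (A := B.reverse) (B := A.reverse) (by simpa using hl.reverse)
  rwa [prod_reverse_reflVec] at h

/-- The witness is `s_{γ₁} ⋯ s_{γₖ} δ`, where `γ₁ ⋯ γₖ` is the part of the word before the first
occurrence of `δ`. -/
lemma IsReducedWord.exists_inversion_coeff_eq_one {l : List V} {w : V ≃ₗ[ℝ] V}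
    (hl : P.IsReducedWord l w) {δ : V} (hδ : δ ∈ l) :
    ∃ μ ∈ P.Pos, w.symm μ ∈ P.Neg ∧ P.coeff δ μ = 1 := by
  classical
  obtain ⟨A, B, hδA, rfl, -⟩ := List.exists_erase_eq hδ
  have hA : ∀ x ∈ A, x ∈ P.simples := fun x hx => hl.1.1 x (List.mem_append_left _ hx)
  have hδS : δ ∈ P.simples := hl.1.1 δ (by simp)
  refine ⟨_, hl.prod_mem_pos, ?_, by rw [IsWordOf.coeff_map ⟨hA, rfl⟩ hδA, coeff_self hδS]⟩
  have hw : w = (A.map reflVec).prod * (reflVec δ * (B.map reflVec).prod) := by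
    rw [← hl.1.2]; simp
  have h : w.symm ((A.map reflVec).prod δ) = -(((B.map reflVec).prod)⁻¹ δ) := by
    rw [LinearEquiv.symm_apply_eq, hw, map_neg]
    simp [reflVec_self (P.root_ne_zero δ (P.simples_subset hδS))]
  exact h ▸ neg_mem_neg.mpr hl.inv_prod_mem_pos

end Inversions

section SimplyLaced

variable {P : RootSystemData V}

lemma sub_mem_roots_of_inner_pos (hSL : P.SimplyLaced) {x y : V} (hx : x ∈ P.roots)
    (hy : y ∈ P.roots) (hne : x ≠ y) (hpos : 0 < ⟪x, y⟫) : x - y ∈ P.roots := by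
  obtain ⟨n, hn⟩ := P.pairing_int x hx y hy
  have hyy : 0 < ⟪y, y⟫ := real_inner_self_pos.mpr (P.root_ne_zero y hy)
  have hlt : ⟪x, y⟫ < ⟪y, y⟫ := by
    have h := real_inner_self_pos.mpr (sub_ne_zero.mpr hne)
    rw [inner_sub_left, inner_sub_right, inner_sub_right, hSL x hx y hy, real_inner_comm x y] at h
    linarith
  have hn1 : n = 1 := by
    have h0 : (0 : ℝ) < n := by rw [hn, cpair]; positivity
    have h2 : (n : ℝ) < 2 := by rw [hn, cpair, div_lt_iff₀ hyy]; linarith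
    have h0' : 0 < n := by exact_mod_cast h0
    have h2' : n < 2 := by exact_mod_cast h2
    omega
  simpa [reflVec_apply, ← hn, hn1] using P.reflect_mem y hy x hx

lemma exists_simple_inner_pos {x : V} (hx : x ∈ P.Pos) : ∃ δ ∈ P.simples, 0 < ⟪x, δ⟫ := by
  obtain ⟨hroot, c, hc⟩ := hx
  by_contra! h
  refine P.root_ne_zero x hroot (real_inner_self_nonpos.mp ?_)
  nth_rewrite 2 [hc]
  rw [inner_sum]
  exact Finset.sum_nonpos fun δ hδ => by
    rw [real_inner_smul_right]
    exact mul_nonpos_of_nonneg_of_nonpos (Nat.cast_nonneg _) (h δ hδ)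

lemma sub_mem_pos_of_mem_roots {x γ : V} (hx : x ∈ P.Pos) (hγ : γ ∈ P.simples)
    (h : x - γ ∈ P.roots) : x - γ ∈ P.Pos := by
  refine (mem_pos_or_mem_neg h).resolve_right fun hneg => ?_
  have := one_le_height hneg
  rw [map_neg, map_sub, height_simple hγ] at this
  linarith [one_le_height hx]

lemma exists_sub_simple_mem_pos (hSL : P.SimplyLaced) {x : V} (hx : x ∈ P.Pos)
    (hns : x ∉ P.simples) : ∃ γ ∈ P.simples, x - γ ∈ P.Pos := by
  obtain ⟨γ, hγ, hpos⟩ := exists_simple_inner_pos hx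
  refine ⟨γ, hγ, sub_mem_pos_of_mem_roots hx hγ ?_⟩
  exact sub_mem_roots_of_inner_pos hSL hx.1 (P.simples_subset hγ) (fun h => hns (h ▸ hγ)) hpos

end SimplyLaced

section Minuscule

variable {P : RootSystemData V} {α ϖ : V}

lemma cpair_eq_coeff (hSL : P.SimplyLaced) (hα : α ∈ P.simples)
    (hfw : P.IsFundamentalWeight α ϖ) {x : V} (hx : x ∈ P.roots) :
    cpair ϖ x = P.coeff α x := by
  have hinner : ∀ δ ∈ P.simples, ⟪ϖ, δ⟫ = cpair ϖ δ * ⟪x, x⟫ / 2 := fun δ hδ => by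
    rw [inner_eq_cpair_mul (P.root_ne_zero δ (P.simples_subset hδ)),
      hSL δ (P.simples_subset hδ) x hx]
  have h : ⟪ϖ, x⟫ = P.coeff α x * ⟪x, x⟫ / 2 := by
    conv_lhs => rw [← sum_coeff_smul (mem_span_of_mem_roots hx)]
    rw [inner_sum, Finset.sum_eq_single_of_mem α hα fun δ hδ hne => by
      rw [real_inner_smul_right, hinner δ hδ, hfw.2 δ hδ hne, zero_mul, zero_div, mul_zero],
      real_inner_smul_right, hinner α hα, hfw.1]
    ring
  have hx0 : ⟪x, x⟫ ≠ 0 := (real_inner_self_pos.mpr (P.root_ne_zero x hx)).ne'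
  rw [cpair, h]
  field_simp

lemma IsPosComb.map_of_coeff_eq_zero [DecidableEq V] (hα : α ∈ P.simples) {w : V ≃ₗ[ℝ] V}
    (hWI : ∀ γ ∈ P.simples.erase α, w γ ∈ P.Pos) {x : V} (hx : P.IsPosComb x)
    (h0 : P.coeff α x = 0) : P.IsPosComb (w x) := by
  obtain ⟨c, rfl⟩ := hx
  rw [coeff_sum_smul hα] at h0
  rw [← Finset.add_sum_erase _ _ hα, h0, zero_smul, zero_add, map_sum,
    isPosComb_iff_mem_closure]
  refine AddSubmonoid.sum_mem _ fun γ hγ => ?_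
  rw [map_smul, Nat.cast_smul_eq_nsmul]
  exact AddSubmonoid.nsmul_mem _ (isPosComb_iff_mem_closure.mp (hWI γ hγ).2) _

/-- Every root inverted by `w⁻¹` has `α`-coefficient `1`: at most `1` by minusculity, and not `0`
since `w` keeps the roots of the Levi subsystem `S \ {α}` positive. -/
lemma coeff_neg_symm_eq_one [DecidableEq V] (hSL : P.SimplyLaced) (hα : α ∈ P.simples)
    (hfw : P.IsFundamentalWeight α ϖ) (hminu : P.IsMinusculeWeight ϖ) {w : V ≃ₗ[ℝ] V}
    (hWI : ∀ γ ∈ P.simples.erase α, w γ ∈ P.Pos) {μ : V} (hμ : μ ∈ P.Pos)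
    (hneg : w.symm μ ∈ P.Neg) : P.coeff α (-(w.symm μ)) = 1 := by
  obtain ⟨c, hc⟩ := hneg.2
  have hle : (c α : ℝ) ≤ 1 := by
    rw [← coeff_sum_smul hα (fun γ => (c γ : ℝ)), ← hc, ← cpair_eq_coeff hSL hα hfw hneg.1]
    exact hminu _ hneg
  have hne : (c α : ℝ) ≠ 0 := fun h0 => by
    have h := hneg.2.map_of_coeff_eq_zero hα hWI (by rw [hc, coeff_sum_smul hα, h0])
    rw [map_neg, LinearEquiv.apply_symm_apply] at h
    exact not_isPosComb_of_mem_neg (neg_mem_neg.mpr hμ) h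
  have hc1 : c α = 1 := by
    have := Nat.cast_le_one.mp hle
    have := Nat.cast_ne_zero.mp hne
    omega
  rw [hc, coeff_sum_smul hα, hc1, Nat.cast_one]

end Minuscule

section Maximality

variable {P : RootSystemData V} [DecidableEq V] {α ϖ : V} {w : V ≃ₗ[ℝ] V}

lemma symm_add_not_mem_neg (hSL : P.SimplyLaced) (hα : α ∈ P.simples)
    (hfw : P.IsFundamentalWeight α ϖ) (hminu : P.IsMinusculeWeight ϖ)
    (hWI : ∀ γ ∈ P.simples.erase α, w γ ∈ P.Pos) {μ ν : V} (hμ : μ ∈ P.Pos) (hν : ν ∈ P.Pos)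
    (hμν : μ + ν ∈ P.Pos) (hμneg : w.symm μ ∈ P.Neg) (hνneg : w.symm ν ∈ P.Neg) :
    w.symm (μ + ν) ∉ P.Neg := fun h => by
  have h1 := coeff_neg_symm_eq_one hSL hα hfw hminu hWI hμν h
  rw [map_add, neg_add, map_add, coeff_neg_symm_eq_one hSL hα hfw hminu hWI hμ hμneg,
    coeff_neg_symm_eq_one hSL hα hfw hminu hWI hν hνneg] at h1
  norm_num at h1

/-- Induction on the height of `μ`, peeling off a simple root `γ` with `μ - γ` positive. -/
lemma rootLE_symm_of_mem_neg (hSL : P.SimplyLaced) (hα : α ∈ P.simples)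
    (hfw : P.IsFundamentalWeight α ϖ) (hminu : P.IsMinusculeWeight ϖ) (hw : w ∈ P.Weyl)
    (hWI : ∀ γ ∈ P.simples.erase α, w γ ∈ P.Pos) {β : V}
    (huniq : ∀ γ ∈ P.simples, w.symm γ ∈ P.Neg → γ = β)
    {μ : V} (hμ : μ ∈ P.Pos) (hneg : w.symm μ ∈ P.Neg) : P.rootLE (w.symm β) (w.symm μ) := by
  have hw' : w.symm ∈ P.Weyl := P.Weyl.inv_mem hw
  obtain ⟨n, hn⟩ := exists_nat_ge (P.height μ)
  induction n generalizing μ with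
  | zero =>
    rw [Nat.cast_zero] at hn
    linarith [one_le_height hμ]
  | succ n ih =>
    by_cases hsimple : μ ∈ P.simples
    · rw [huniq μ hsimple hneg, rootLE, sub_self]
      exact isPosComb_zero
    obtain ⟨γ, hγ, hμγ⟩ := exists_sub_simple_mem_pos hSL hμ hsimple
    have hsplit : w.symm μ = w.symm (μ - γ) + w.symm γ := by rw [← map_add, sub_add_cancel]
    rw [rootLE, hsplit]
    rcases mem_pos_or_mem_neg (map_mem_roots hw' hμγ.1) with h₁ | h₁ <;>
    rcases mem_pos_or_mem_neg (map_mem_roots hw' (P.simples_subset hγ)) with h₂ | h₂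
    · exact absurd (hsplit ▸ h₁.2.add h₂.2) (not_isPosComb_of_mem_neg hneg)
    · rw [← huniq γ hγ h₂, add_sub_cancel_right]
      exact h₁.2
    · have hheight : P.height (μ - γ) ≤ n := by
        rw [map_sub, height_simple hγ]
        push_cast at hn
        linarith
      rw [add_sub_right_comm]
      exact (ih hμγ h₁ hheight).add h₂.2
    · refine absurd hneg ?_
      rw [← sub_add_cancel μ γ]
      exact symm_add_not_mem_neg hSL hα hfw hminu hWI hμγ (simple_mem_pos hγ)
        (by rwa [sub_add_cancel]) h₁ h₂

end Maximality

end RootSystemData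

theorem supp_eq_supp_root_general [DecidableEq V] (P : RootSystemData V)
    (hSL : P.SimplyLaced)
    (α : V) (hα : α ∈ P.simples) (ϖ : V)
    (hfw : P.IsFundamentalWeight α ϖ) (hminu : P.IsMinusculeWeight ϖ)
    (w : V ≃ₗ[ℝ] V) (hw : w ∈ P.Weyl)
    (hWI : ∀ γ ∈ P.simples.erase α, w γ ∈ P.Pos)
    (β : V) (hβ : β ∈ P.simples)
    (huniq : ∀ γ ∈ P.simples, w.symm γ ∈ P.Neg → γ = β)
    (c : V → ℕ) (hc : -(w.symm β) = ∑ δ ∈ P.simples, (c δ : ℝ) • δ) :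
    P.Supp w = {δ | δ ∈ P.simples ∧ c δ ≠ 0} := by
  have hcoeff : ∀ δ ∈ P.simples, P.coeff δ (w.symm β) = -c δ := fun δ hδ => by
    rw [← neg_neg (w.symm β), map_neg, hc, RootSystemData.coeff_sum_smul hδ]
  ext δ
  refine ⟨fun ⟨hδ, l, hl, hδl⟩ => ⟨hδ, ?_⟩, fun ⟨hδ, hcδ⟩ => ⟨hδ, ?_⟩⟩
  · obtain ⟨ρ, hρ, hwρ, hρδ⟩ :=
      hl.reverse.exists_inversion_coeff_eq_one (List.mem_reverse.mpr hδl)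
    have hle := RootSystemData.rootLE_symm_of_mem_neg hSL hα hfw hminu hw hWI huniq
      (μ := -(w ρ)) hwρ (by rwa [map_neg, LinearEquiv.symm_apply_apply, RootSystemData.neg_mem_neg])
    have h := RootSystemData.IsPosComb.coeff_nonneg hle hδ
    rw [map_neg, LinearEquiv.symm_apply_apply, map_sub, map_neg, hρδ, hcoeff δ hδ] at h
    intro h0
    rw [h0, Nat.cast_zero] at h
    linarith
  · obtain ⟨l, hl⟩ := RootSystemData.exists_isReducedWord hw
    refine ⟨l, hl, by_contra fun hδl => hcδ ?_⟩
    have h := hl.reverse.1.coeff_map (mt List.mem_reverse.mp hδl) β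
    rw [show w⁻¹ = w.symm from rfl, hcoeff δ hδ] at h
    have hle : (c δ : ℝ) ≤ 0 := by
      linarith [(RootSystemData.simple_mem_pos hβ).2.coeff_nonneg hδ]
    exact Nat.eq_zero_of_le_zero (by exact_mod_cast hle)

/-- In the minuscule situation, if `β` is the unique simple root with
`w⁻¹(β) ∈ R⁻`, then the support of `w` equals the support of the root `-w⁻¹(β)`. -/
theorem supp_eq_supp_root [DecidableEq V] (P : RootSystemData V)
    (hSL : P.SimplyLaced) (hirr : P.Irred)
    (α : V) (hα : α ∈ P.simples) (ϖ : V)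
    (hfw : P.IsFundamentalWeight α ϖ) (hminu : P.IsMinusculeWeight ϖ)
    (w : V ≃ₗ[ℝ] V) (hw : w ∈ P.Weyl)
    (hWI : ∀ γ ∈ P.simples.erase α, w γ ∈ P.Pos)
    (β : V) (hβ : β ∈ P.simples) (hβneg : w.symm β ∈ P.Neg)
    (huniq : ∀ γ ∈ P.simples, w.symm γ ∈ P.Neg → γ = β)
    (c : V → ℕ) (hc : -(w.symm β) = ∑ δ ∈ P.simples, (c δ : ℝ) • δ) :
    P.Supp w = {δ | δ ∈ P.simples ∧ c δ ≠ 0} :=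
  supp_eq_supp_root_general P hSL α hα ϖ hfw hminu w hw hWI β hβ huniq c hc
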